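/- Σ_{{x,y,z}} b_{{x,y}}·b_{{x,z}}·b_{{y,z}} ≥ 2c³n(2n−2)/(3(2n−1)²) − c³n/(2n−1), where the sum is over all 3-element subsets {x,y,z} of the vertex set of K_{2n} (equivalently, over all unordered triples of edges of K_{2n} pairwise intersecting in exactly one vertex, i.e. triangles). -/

import Mathlib

set_option linter.unusedVariables false

open scoped Classical

noncomputable section

/-- The derangement graph on `Sym(n)`: permutations adjacent iff they disagree everywhere
(equivalently, `σ τ⁻¹` is a derangement). -/
def derangementGraph (n : ℕ) : SimpleGraph (Equiv.Perm (Fin n)) where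
  Adj σ τ := σ ≠ τ ∧ ∀ i, σ i ≠ τ i
  symm := ⟨fun σ τ h => ⟨h.1.symm, fun i => (h.2 i).symm⟩⟩
  loopless := ⟨fun σ h => h.1 rfl⟩

/-- The star `A_{a→b}` in the derangement graph: permutations sending `a` to `b`. -/
def derStar (n : ℕ) (a b : Fin n) : Set (Equiv.Perm (Fin n)) := {σ | σ a = b}

/-- Perfect matchings of `K_{2n}`, encoded as fixed-point-free involutions of `Fin (2n)`. -/
abbrev PMatching (n : ℕ) :=
  {f : Equiv.Perm (Fin (2 * n)) // (∀ x, f (f x) = x) ∧ ∀ x, f x ≠ x}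

/-- The perfect matching graph `M_n`: matchings adjacent iff they share no edge. -/
def matchingGraph (n : ℕ) : SimpleGraph (PMatching n) where
  Adj m m' := m ≠ m' ∧ ∀ x, m.1 x ≠ m'.1 x
  symm := ⟨fun m m' h => ⟨h.1.symm, fun x => (h.2 x).symm⟩⟩
  loopless := ⟨fun m h => h.1 rfl⟩

/-- The star `S_e` of a (non-diagonal) pair `e : Sym2 (Fin (2n))`:
all perfect matchings containing the edge `e`. -/
def pmStar (n : ℕ) (e : Sym2 (Fin (2 * n))) : Set (PMatching n) :=
  {m | ∃ x, e = s(x, m.1 x)}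

/-- A set of vertices is independent if it spans no edges. -/
def IsIndepSet {V : Type*} (G : SimpleGraph V) (s : Set V) : Prop :=
  ∀ a ∈ s, ∀ b ∈ s, ¬ G.Adj a b

/-- The independence number of a finite graph. -/
noncomputable def indepNum {V : Type*} [Fintype V] (G : SimpleGraph V) : ℕ :=
  sSup {k | ∃ s : Set V, IsIndepSet G s ∧ s.ncard = k}

/-- `edIn G s` is the number of edges of `G` with both endpoints in `s`. -/
noncomputable def edIn {V : Type*} (G : SimpleGraph V) (s : Set V) : ℕ :=
  Nat.card {e : Sym2 V // e ∈ G.edgeSet ∧ ∀ v ∈ e, v ∈ s}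

/-- Probability that the random spanning subgraph `G_p` of `G` (each edge of `G` kept
independently with probability `p`) satisfies the predicate `P`. -/
noncomputable def prRandSub {V : Type*} [Fintype V] (G : SimpleGraph V) (p : ℝ)
    (P : SimpleGraph V → Prop) : ℝ :=
  ∑ S ∈ G.edgeFinset.powerset,
    if P (SimpleGraph.fromEdgeSet (S : Set (Sym2 V))) then
      p ^ S.card * (1 - p) ^ (G.edgeFinset.card - S.card) else 0

/-- The edges of `K_{2n}`: non-diagonal elements of `Sym2 (Fin (2n))`. -/
noncomputable def pmEdges (n : ℕ) : Finset (Sym2 (Fin (2 * n))) :=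
  Finset.univ.filter fun e => ¬e.IsDiag

/-- Expectation of a function on perfect matchings: `E[φ] = (1/(2n-1)!!) Σ_P φ(P)`. -/
noncomputable def pmExp (n : ℕ) (φ : PMatching n → ℝ) : ℝ :=
  (1 / (Nat.doubleFactorial (2 * n - 1) : ℝ)) * ∑ m, φ m

/-- The inner product `⟨f,g⟩ = (1/(2n-1)!!) Σ_P f(P)g(P)` on functions on matchings. -/
noncomputable def pmInner (n : ℕ) (f g : PMatching n → ℝ) : ℝ :=
  (1 / (Nat.doubleFactorial (2 * n - 1) : ℝ)) * ∑ m, f m * g m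

/-- `U`: the linear span of the indicator vectors of the stars of `M_n`. -/
noncomputable def starSpan (n : ℕ) : Submodule ℝ (PMatching n → ℝ) :=
  Submodule.span ℝ
    {f | ∃ e : Sym2 (Fin (2 * n)), ¬e.IsDiag ∧ f = Set.indicator (pmStar n e) 1}

/-- `a_e = |A ∩ S_e|/(2n-3)!!`. -/
noncomputable def aCoe (n : ℕ) (A : Set (PMatching n)) (e : Sym2 (Fin (2 * n))) : ℝ :=
  ((A ∩ pmStar n e).ncard : ℝ) / (Nat.doubleFactorial (2 * n - 3) : ℝ)

/-- `b_e = a_e - c/(2n-1)`. -/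
noncomputable def bCoe (n : ℕ) (A : Set (PMatching n)) (c : ℝ)
    (e : Sym2 (Fin (2 * n))) : ℝ :=
  aCoe n A e - c / (2 * (n : ℝ) - 1)

/-- `g = Σ_e a_e · 1_{S_e}`. -/
noncomputable def gFun (n : ℕ) (A : Set (PMatching n)) : PMatching n → ℝ :=
  fun m => ∑ e ∈ pmEdges n, aCoe n A e * Set.indicator (pmStar n e) 1 m

/-- `h = Σ_e b_e · 1_{S_e}`. -/
noncomputable def hFun (n : ℕ) (A : Set (PMatching n)) (c : ℝ) : PMatching n → ℝ :=
  fun m => ∑ e ∈ pmEdges n, bCoe n A c e * Set.indicator (pmStar n e) 1 m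

/-
Put `a x y = a_{xy}` and `t = c/(2n-1)`, so that `b = a - t`. The matrix `a` is symmetric,
nonnegative and zero on the diagonal, and each of its rows sums to `c`, since the stars through a
vertex `x` partition the matchings according to the partner of `x`. Expand
`(a_{xy} - t)(a_{xz} - t)(a_{yz} - t)` over the ordered triples of distinct vertices: the cubic
term is nonnegative; each of the three quadratic terms is at most `Σ_x (Σ_y a_{xy})² = 2n c²`;
each of the three linear terms is exactly `(2n-2)·2n·c`; and there are `2n(2n-1)(2n-2)` triples.
-/

open Finset

section DistinctTriples

variable (V : Type*) [Fintype V] [DecidableEq V]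

def distinctTriples : Finset (V × V × V) :=
  univ.filter fun p => p.1 ≠ p.2.1 ∧ p.1 ≠ p.2.2 ∧ p.2.1 ≠ p.2.2

variable {V}

lemma sum_distinctTriples (F : V → V → V → ℝ) :
    ∑ p ∈ distinctTriples V, F p.1 p.2.1 p.2.2 =
      ∑ x, ∑ y, ∑ z, if x ≠ y ∧ x ≠ z ∧ y ≠ z then F x y z else 0 := by
  simp only [distinctTriples, sum_filter, Fintype.sum_prod_type]

lemma sum_distinctTriples_swap (F : V × V × V → ℝ) :
    ∑ p ∈ distinctTriples V, F (p.1, p.2.2, p.2.1) = ∑ p ∈ distinctTriples V, F p :=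
  sum_nbij' (fun p => (p.1, p.2.2, p.2.1)) (fun p => (p.1, p.2.2, p.2.1))
    (by simp [distinctTriples]; tauto) (by simp [distinctTriples]; tauto)
    (by simp) (by simp) (by simp)

lemma sum_distinctTriples_rotate (F : V × V × V → ℝ) :
    ∑ p ∈ distinctTriples V, F (p.2.1, p.2.2, p.1) = ∑ p ∈ distinctTriples V, F p :=
  sum_nbij' (fun p => (p.2.1, p.2.2, p.1)) (fun p => (p.2.2, p.1, p.2.1))
    (by simp [distinctTriples]; tauto) (by simp [distinctTriples]; tauto)
    (by simp) (by simp) (by simp)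

lemma sum_distinctTriples_of_pair (g : V → V → ℝ) (hg : ∀ x, g x x = 0) :
    ∑ p ∈ distinctTriples V, g p.1 p.2.1 = (Fintype.card V - 2) * ∑ x, ∑ y, g x y := by
  rw [sum_distinctTriples (fun x y _ => g x y), mul_sum]
  refine sum_congr rfl fun x _ => ?_
  rw [mul_sum]
  refine sum_congr rfl fun y _ => ?_
  rcases eq_or_ne x y with rfl | hxy
  · simp [hg]
  have count : ∀ z, (if x ≠ y ∧ x ≠ z ∧ y ≠ z then g x y else 0) =
      g x y - (if z = x then g x y else 0) - (if z = y then g x y else 0) := by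
    intro z
    by_cases hzx : z = x <;> by_cases hzy : z = y <;> simp_all [eq_comm]
  simp only [count, sum_sub_distrib, sum_ite_eq', mem_univ, if_true, sum_const, card_univ,
    nsmul_eq_mul]
  ring

lemma card_distinctTriples :
    ((distinctTriples V).card : ℝ) =
      Fintype.card V * (Fintype.card V - 1) * (Fintype.card V - 2) := by
  rw [card_eq_sum_ones, Nat.cast_sum, Nat.cast_one]
  calc ∑ p ∈ distinctTriples V, (1 : ℝ)
      = ∑ p ∈ distinctTriples V, (1 - if p.1 = p.2.1 then 1 else 0) :=
        sum_congr rfl fun p hp => by simp_all [distinctTriples]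
    _ = (Fintype.card V - 2) * ∑ x : V, ∑ y : V, (1 - if x = y then 1 else 0) :=
        sum_distinctTriples_of_pair (fun x y => 1 - if x = y then 1 else 0) fun x => by simp
    _ = _ := by simp only [sum_sub_distrib, sum_ite_eq, mem_univ, if_true, sum_const,
        card_univ, nsmul_eq_mul, mul_one]; ring

lemma sum_distinctTriples_mul_le (a : V → V → ℝ) (c : ℝ) (ha : ∀ x y, 0 ≤ a x y)
    (hrow : ∀ x, ∑ y, a x y = c) :
    ∑ p ∈ distinctTriples V, a p.1 p.2.1 * a p.1 p.2.2 ≤ Fintype.card V * c ^ 2 :=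
  calc ∑ p ∈ distinctTriples V, a p.1 p.2.1 * a p.1 p.2.2
      ≤ ∑ p : V × V × V, a p.1 p.2.1 * a p.1 p.2.2 :=
        sum_le_univ_sum_of_nonneg fun p => mul_nonneg (ha _ _) (ha _ _)
    _ = ∑ x, (∑ y, a x y) * ∑ z, a x z := by
        simp only [Fintype.sum_prod_type, sum_mul_sum]
    _ = Fintype.card V * c ^ 2 := by simp [hrow, sq]

lemma le_sum_distinctTriples_mul_sub (a : V → V → ℝ) (c t : ℝ) (ha : ∀ x y, 0 ≤ a x y)
    (ha_symm : ∀ x y, a x y = a y x) (ha_diag : ∀ x, a x x = 0) (hrow : ∀ x, ∑ y, a x y = c)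
    (ht : 0 ≤ t) :
    -(3 * t * Fintype.card V * c ^ 2) + 3 * t ^ 2 * (Fintype.card V - 2) * Fintype.card V * c
        - t ^ 3 * Fintype.card V * (Fintype.card V - 1) * (Fintype.card V - 2) ≤
      ∑ p ∈ distinctTriples V, (a p.1 p.2.1 - t) * (a p.1 p.2.2 - t) * (a p.2.1 p.2.2 - t) := by
  set M : ℝ := (Fintype.card V : ℝ)
  set T := distinctTriples V
  set Q := ∑ p ∈ T, a p.1 p.2.1 * a p.1 p.2.2
  set L := ∑ p ∈ T, a p.1 p.2.1
  -- drop the nonnegative cubic term; rotating and swapping the triple turn the quadratic and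
  -- linear terms that remain into copies of `Q` and `L`
  have pointwise : ∀ p ∈ T, -t * (a p.1 p.2.1 * a p.1 p.2.2 + a p.2.1 p.2.2 * a p.2.1 p.1
        + a p.2.2 p.1 * a p.2.2 p.2.1) + t ^ 2 * (a p.1 p.2.1 + a p.1 p.2.2 + a p.2.1 p.2.2) - t ^ 3
      ≤ (a p.1 p.2.1 - t) * (a p.1 p.2.2 - t) * (a p.2.1 p.2.2 - t) := by
    intro ⟨x, y, z⟩ _
    have := mul_nonneg (mul_nonneg (ha x y) (ha x z)) (ha y z)
    rw [ha_symm y x, ha_symm z x, ha_symm z y]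
    nlinarith
  have hQ₂ : ∑ p ∈ T, a p.2.1 p.2.2 * a p.2.1 p.1 = Q :=
    sum_distinctTriples_rotate fun p => a p.1 p.2.1 * a p.1 p.2.2
  have hQ₃ : ∑ p ∈ T, a p.2.2 p.1 * a p.2.2 p.2.1 = Q :=
    (sum_distinctTriples_rotate fun p => a p.2.1 p.2.2 * a p.2.1 p.1).trans hQ₂
  have hL₂ : ∑ p ∈ T, a p.1 p.2.2 = L := sum_distinctTriples_swap fun p => a p.1 p.2.1
  have hL₃ : ∑ p ∈ T, a p.2.1 p.2.2 = L := sum_distinctTriples_rotate fun p => a p.1 p.2.1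
  have hQ : Q ≤ M * c ^ 2 := sum_distinctTriples_mul_le a c ha hrow
  have hL : L = (M - 2) * (M * c) :=
    (sum_distinctTriples_of_pair a ha_diag).trans (by simp [hrow, M])
  calc -(3 * t * M * c ^ 2) + 3 * t ^ 2 * (M - 2) * M * c - t ^ 3 * M * (M - 1) * (M - 2)
      ≤ -t * (Q + Q + Q) + t ^ 2 * (L + L + L) - t ^ 3 * T.card := by
        rw [card_distinctTriples, hL]
        nlinarith [mul_le_mul_of_nonneg_left hQ ht]
    _ = ∑ p ∈ T, (-t * (a p.1 p.2.1 * a p.1 p.2.2 + a p.2.1 p.2.2 * a p.2.1 p.1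
        + a p.2.2 p.1 * a p.2.2 p.2.1) + t ^ 2 * (a p.1 p.2.1 + a p.1 p.2.2 + a p.2.1 p.2.2)
        - t ^ 3) := by
        simp only [sum_sub_distrib, sum_add_distrib, ← mul_sum, sum_const, nsmul_eq_mul,
          hQ₂, hQ₃, hL₂, hL₃]
        ring
    _ ≤ _ := sum_le_sum pointwise

end DistinctTriples

lemma mem_pmStar_iff {n : ℕ} (m : PMatching n) (x y : Fin (2 * n)) :
    m ∈ pmStar n s(x, y) ↔ m.1 x = y := by
  constructor
  · rintro ⟨w, hw⟩
    rcases Sym2.eq_iff.mp hw with ⟨rfl, rfl⟩ | ⟨rfl, rfl⟩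
    · rfl
    · exact m.2.1 _
  · rintro rfl
    exact ⟨x, rfl⟩

lemma sum_ncard_inter_pmStar {n : ℕ} (A : Set (PMatching n)) (x : Fin (2 * n)) :
    ∑ y, ((A ∩ pmStar n s(x, y)).ncard : ℝ) = A.ncard := by
  have hfiber : ∀ y,
      (A ∩ pmStar n s(x, y)).ncard = (A.toFinset.filter fun m => m.1 x = y).card := by
    intro y
    rw [← Set.ncard_coe_finset]
    congr 1
    ext m
    simp [mem_pmStar_iff]
  rw [← Nat.cast_sum, Set.ncard_eq_toFinset_card',
    card_eq_sum_card_fiberwise fun m _ => mem_univ (m.1 x)]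
  simp only [hfiber]

lemma aCoe_self {n : ℕ} (A : Set (PMatching n)) (x : Fin (2 * n)) : aCoe n A s(x, x) = 0 := by
  have : A ∩ pmStar n s(x, x) = ∅ :=
    Set.eq_empty_of_forall_notMem fun m hm => m.2.2 x ((mem_pmStar_iff m x x).mp hm.2)
  simp [aCoe, this]

lemma sum_aCoe {n : ℕ} (A : Set (PMatching n)) (c : ℝ)
    (hA : (A.ncard : ℝ) = c * (Nat.doubleFactorial (2 * n - 3) : ℝ)) (x : Fin (2 * n)) :
    ∑ y, aCoe n A s(x, y) = c := by
  simp only [aCoe, ← sum_div, sum_ncard_inter_pmStar, hA]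
  field_simp

/-- Lower bound on the triangle sum `Σ_{{x,y,z}} b_{xy} b_{xz} b_{yz}` (over 3-element subsets
of the vertex set of `K_{2n}`, written as one sixth of the sum over ordered triples of pairwise
distinct vertices): it is at least `2c³n(2n-2)/(3(2n-1)²) - c³n/(2n-1)`. -/
theorem stmt15 (n : ℕ) (hn : 3 ≤ n) (A : Set (PMatching n)) (c : ℝ) (hc : 0 ≤ c)
    (hA : (A.ncard : ℝ) = c * (Nat.doubleFactorial (2 * n - 3) : ℝ)) :
    2 * c ^ 3 * (n : ℝ) * (2 * (n : ℝ) - 2) / (3 * (2 * (n : ℝ) - 1) ^ 2) -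
        c ^ 3 * (n : ℝ) / (2 * (n : ℝ) - 1) ≤
      (1 / 6) * ∑ x : Fin (2 * n), ∑ y : Fin (2 * n), ∑ z : Fin (2 * n),
        if x ≠ y ∧ x ≠ z ∧ y ≠ z then
          bCoe n A c s(x, y) * bCoe n A c s(x, z) * bCoe n A c s(y, z)
        else 0 := by
  have hpos : (0 : ℝ) < 2 * n - 1 := by
    have : (3 : ℝ) ≤ n := by exact_mod_cast hn
    linarith
  have key := le_sum_distinctTriples_mul_sub (fun x y => aCoe n A s(x, y)) c (c / (2 * n - 1))
    (fun _ _ => div_nonneg (Nat.cast_nonneg _) (Nat.cast_nonneg _))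
    (fun x y => by rw [Sym2.eq_swap]) (aCoe_self A) (sum_aCoe A c hA) (div_nonneg hc hpos.le)
  rw [sum_distinctTriples fun x y z => (aCoe n A s(x, y) - c / (2 * n - 1)) *
    (aCoe n A s(x, z) - c / (2 * n - 1)) * (aCoe n A s(y, z) - c / (2 * n - 1))] at key
  simp only [Fintype.card_fin, Nat.cast_mul, Nat.cast_ofNat] at key
  simp only [bCoe]
  calc _ = 1 / 6 * (-(3 * (c / (2 * n - 1)) * (2 * n) * c ^ 2)
          + 3 * (c / (2 * n - 1)) ^ 2 * (2 * n - 2) * (2 * n) * c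
          - (c / (2 * n - 1)) ^ 3 * (2 * n) * (2 * n - 1) * (2 * n - 2)) := by
        field_simp
        ring
    _ ≤ _ := by gcongr

end
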